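/- arXiv:1708.03366 — 2 statements merged into one kernel-verified Lean document; each statement's English description precedes it below -/
import Mathlib

section
/- Let N⁺, N⁻ ≥ 1 be integers and α = (α⁺, α⁻) with α⁺ ≤ N⁺ and α⁻ ≤ N⁻. If 2α⁺ > N⁺ or 2α⁻ > N⁻, then there exist a linearly separable training set (D⁺, D⁻) of feature vectors in ℝ² with card D⁺ = N⁺ and card D⁻ = N⁻, an α-bounded feature attack (E⁺, E⁻) on (D⁺, D⁻), and an affine classifier ĥ such that: ĥ satisfies the majority constraint on (E⁺, E⁻); ĥ minimizes the total 0-1 error err⁺(h, E⁺) + err⁻(h, E⁻) among all affine classifiers h satisfying the majority constraint on (E⁺, E⁻); and ĥ misclassifies every element of D⁺ or every element of D⁻. (Thus the majority 0-1 loss linear classification algorithm is perfectly attackable when the attacker can tamper more than half of the positive or of the negative training data.) -/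
open scoped Classical BigOperators

/-- Value of the affine classifier `h = (w, b)` at feature vector `x`. -/
noncomputable def hval {p : ℕ} (h : (Fin p → ℝ) × ℝ) (x : Fin p → ℝ) : ℝ :=
  (∑ i, h.1 i * x i) + h.2

/-- Number of positive feature vectors in `S` misclassified by `h` (with multiplicity). -/
noncomputable def errPos {p : ℕ} (h : (Fin p → ℝ) × ℝ) (S : Multiset (Fin p → ℝ)) : ℕ :=
  Multiset.countP (fun x => hval h x ≤ 0) S

/-- Number of negative feature vectors in `S` misclassified by `h` (with multiplicity). -/
noncomputable def errNeg {p : ℕ} (h : (Fin p → ℝ) × ℝ) (S : Multiset (Fin p → ℝ)) : ℕ :=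
  Multiset.countP (fun x => 0 < hval h x) S

/-- `(Ep, En)` is an `(ap, an)`-bounded feature attack on `(Dp, Dn)`. -/
noncomputable def IsBFA {p : ℕ} (ap an : ℕ) (Dp Dn Ep En : Multiset (Fin p → ℝ)) : Prop :=
  Multiset.card Ep = Multiset.card Dp ∧
  Multiset.card En = Multiset.card Dn ∧
  Multiset.card (Ep - Dp) ≤ ap ∧
  Multiset.card (En - Dn) ≤ an

/-- `(Dp, Dn)` is linearly separable. -/
def LinSep {p : ℕ} (Dp Dn : Multiset (Fin p → ℝ)) : Prop :=
  ∃ h : (Fin p → ℝ) × ℝ, errPos h Dp = 0 ∧ errNeg h Dn = 0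

/-- `h` satisfies the majority constraint on `(Ep, En)`. -/
def Majority {p : ℕ} (h : (Fin p → ℝ) × ℝ) (Ep En : Multiset (Fin p → ℝ)) : Prop :=
  2 * errPos h Ep < Multiset.card Ep ∧ 2 * errNeg h En < Multiset.card En

/-! Place the positives at `-e` and the negatives at `0`, which is separable, and let the
attacker move more than half of the positives to `e`. A classifier meeting the majority
constraint must then be positive at `e` and non-positive at `0`; being affine, it satisfies
`h(-e) = 2 h(0) - h(e) < 0`, so it misclassifies every positive left at `-e`. The classifier
`⟨e, ·⟩ - 1/2` makes exactly these errors, hence is optimal, and it misclassifies all of the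
original positives. Tampering with the negatives is symmetric. -/

open Multiset

lemma Multiset.countP_replicate {α : Type*} (P : α → Prop) [DecidablePred P] (n : ℕ) (x : α) :
    countP P (replicate n x) = if P x then n else 0 := by
  rw [← coe_replicate, coe_countP, List.countP_replicate]
  simp

section Errors

variable {p : ℕ} (h : (Fin p → ℝ) × ℝ)

lemma hval_neg_add_hval (x : Fin p → ℝ) : hval h (-x) + hval h x = 2 * hval h 0 := by
  simp only [hval, Pi.neg_apply, Pi.zero_apply, mul_neg, mul_zero, Finset.sum_neg_distrib,
    Finset.sum_const_zero]
  ring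

lemma errPos_add (S T : Multiset (Fin p → ℝ)) : errPos h (S + T) = errPos h S + errPos h T :=
  countP_add _ _ _

lemma errNeg_add (S T : Multiset (Fin p → ℝ)) : errNeg h (S + T) = errNeg h S + errNeg h T :=
  countP_add _ _ _

lemma errPos_replicate (n : ℕ) (x : Fin p → ℝ) :
    errPos h (replicate n x) = if hval h x ≤ 0 then n else 0 :=
  countP_replicate _ _ _

lemma errNeg_replicate (n : ℕ) (x : Fin p → ℝ) :
    errNeg h (replicate n x) = if 0 < hval h x then n else 0 :=
  countP_replicate _ _ _

variable {h} {S : Multiset (Fin p → ℝ)} {x : Fin p → ℝ}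

lemma count_le_errPos (hx : hval h x ≤ 0) : S.count x ≤ errPos h S :=
  calc S.count x = errPos h (replicate (S.count x) x) := by rw [errPos_replicate, if_pos hx]
    _ ≤ errPos h S := countP_le_of_le _ (le_count_iff_replicate_le.1 le_rfl)

lemma count_le_errNeg (hx : 0 < hval h x) : S.count x ≤ errNeg h S :=
  calc S.count x = errNeg h (replicate (S.count x) x) := by rw [errNeg_replicate, if_pos hx]
    _ ≤ errNeg h S := countP_le_of_le _ (le_count_iff_replicate_le.1 le_rfl)

lemma hval_pos_of_two_mul_errPos_lt (hS : card S < 2 * S.count x)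
    (hmaj : 2 * errPos h S < card S) : 0 < hval h x := by
  by_contra! hx
  have := count_le_errPos (S := S) hx
  omega

lemma hval_nonpos_of_two_mul_errNeg_lt (hS : card S < 2 * S.count x)
    (hmaj : 2 * errNeg h S < card S) : hval h x ≤ 0 := by
  by_contra! hx
  have := count_le_errNeg (S := S) hx
  omega

end Errors

section Tamper

variable {α : Type*} (N k : ℕ) (x y : α)

def tamper : Multiset α := replicate (N - k) x + replicate k y

lemma card_tamper {N k : ℕ} (hk : k ≤ N) : card (tamper N k x y) = N := by
  simp [tamper, Nat.sub_add_cancel hk]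

variable [DecidableEq α]

lemma card_tamper_sub_replicate_le : card (tamper N k x y - replicate N x) ≤ k := by
  have : tamper N k x y - replicate N x ≤ replicate k y := by
    rw [tsub_le_iff_right, tamper, add_comm]
    exact add_le_add le_rfl (replicate_le_replicate _ |>.2 (Nat.sub_le N k))
  simpa using card_le_card this

variable {x y}

lemma count_tamper_left (hxy : x ≠ y) : count x (tamper N k x y) = N - k := by
  simp [tamper, count_replicate, hxy.symm]

lemma count_tamper_right (hxy : x ≠ y) : count y (tamper N k x y) = k := by
  simp [tamper, count_replicate, hxy]

end Tamper

def PerfectlyAttackable (Np Nn ap an : ℕ) : Prop :=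
  ∃ (Dp Dn Ep En : Multiset (Fin 2 → ℝ)) (hhat : (Fin 2 → ℝ) × ℝ),
    Multiset.card Dp = Np ∧ Multiset.card Dn = Nn ∧
    LinSep Dp Dn ∧ IsBFA ap an Dp Dn Ep En ∧
    Majority hhat Ep En ∧
    (∀ h : (Fin 2 → ℝ) × ℝ, Majority h Ep En →
      errPos hhat Ep + errNeg hhat En ≤ errPos h Ep + errNeg h En) ∧
    (errPos hhat Dp = Np ∨ errNeg hhat Dn = Nn)

theorem perfectlyAttackable_of_lt_two_mul_pos {Np Nn ap an : ℕ} (hNn : 1 ≤ Nn) (hap : ap ≤ Np)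
    (hc : Np < 2 * ap) : PerfectlyAttackable Np Nn ap an := by
  set e : Fin 2 → ℝ := ![1, 0]
  have hne : -e ≠ e := by norm_num [e, funext_iff]
  set hhat : (Fin 2 → ℝ) × ℝ := (e, -1 / 2)
  set Ep := tamper Np ap (-e) e
  have hcard : card Ep = Np := card_tamper _ _ hap
  have hhat_pos : errPos hhat Ep = Np - ap := by
    norm_num [Ep, tamper, errPos_add, errPos_replicate, hval, hhat, e]
  have hhat_neg : errNeg hhat (replicate Nn 0) = 0 := by norm_num [errNeg_replicate, hval, hhat]
  refine ⟨replicate Np (-e), replicate Nn 0, Ep, replicate Nn 0, hhat, card_replicate _ _,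
    card_replicate _ _, ?_, ?_, ?_, ?_, Or.inl ?_⟩
  · exact ⟨(-e, -1 / 2), by norm_num [errPos_replicate, errNeg_replicate, hval, e]⟩
  · exact ⟨by rw [hcard, card_replicate], rfl, card_tamper_sub_replicate_le .., by simp⟩
  · exact ⟨by rw [hhat_pos, hcard]; omega, by rw [hhat_neg, card_replicate]; omega⟩
  · rintro h ⟨hmaj_pos, hmaj_neg⟩
    have h0 : hval h 0 ≤ 0 := hval_nonpos_of_two_mul_errNeg_lt (by simp; omega) hmaj_neg
    have he : 0 < hval h e :=
      hval_pos_of_two_mul_errPos_lt (by rw [hcard, count_tamper_right _ _ hne]; omega) hmaj_pos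
    have hme : hval h (-e) ≤ 0 := by linarith [hval_neg_add_hval h e]
    have hmiss := count_le_errPos (S := Ep) hme
    rw [count_tamper_left _ _ hne] at hmiss
    omega
  · norm_num [errPos_replicate, hval, hhat, e]

theorem perfectlyAttackable_of_lt_two_mul_neg {Np Nn ap an : ℕ} (hNp : 1 ≤ Np) (han : an ≤ Nn)
    (hc : Nn < 2 * an) : PerfectlyAttackable Np Nn ap an := by
  set e : Fin 2 → ℝ := ![1, 0]
  have hne : -e ≠ e := by norm_num [e, funext_iff]
  set hhat : (Fin 2 → ℝ) × ℝ := (-e, 1 / 2)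
  set En := tamper Nn an (-e) e
  have hcard : card En = Nn := card_tamper _ _ han
  have hhat_pos : errPos hhat (replicate Np 0) = 0 := by norm_num [errPos_replicate, hval, hhat]
  have hhat_neg : errNeg hhat En = Nn - an := by
    norm_num [En, tamper, errNeg_add, errNeg_replicate, hval, hhat, e]
  refine ⟨replicate Np 0, replicate Nn (-e), replicate Np 0, En, hhat, card_replicate _ _,
    card_replicate _ _, ?_, ?_, ?_, ?_, Or.inr ?_⟩
  · exact ⟨(e, 1 / 2), by norm_num [errPos_replicate, errNeg_replicate, hval, e]⟩
  · exact ⟨rfl, by rw [hcard, card_replicate], by simp, card_tamper_sub_replicate_le ..⟩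
  · exact ⟨by rw [hhat_pos, card_replicate]; omega, by rw [hhat_neg, hcard]; omega⟩
  · rintro h ⟨hmaj_pos, hmaj_neg⟩
    have h0 : 0 < hval h 0 := hval_pos_of_two_mul_errPos_lt (by simp; omega) hmaj_pos
    have he : hval h e ≤ 0 :=
      hval_nonpos_of_two_mul_errNeg_lt (by rw [hcard, count_tamper_right _ _ hne]; omega) hmaj_neg
    have hme : 0 < hval h (-e) := by linarith [hval_neg_add_hval h e]
    have hmiss := count_le_errNeg (S := En) hme
    rw [count_tamper_left _ _ hne] at hmiss
    omega
  · norm_num [errNeg_replicate, hval, hhat, e]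

theorem stmt9 (Np Nn ap an : ℕ) (hNp : 1 ≤ Np) (hNn : 1 ≤ Nn)
    (hap : ap ≤ Np) (han : an ≤ Nn)
    (hcond : Np < 2 * ap ∨ Nn < 2 * an) :
    ∃ (Dp Dn Ep En : Multiset (Fin 2 → ℝ)) (hhat : (Fin 2 → ℝ) × ℝ),
      Multiset.card Dp = Np ∧ Multiset.card Dn = Nn ∧
      LinSep Dp Dn ∧ IsBFA ap an Dp Dn Ep En ∧
      Majority hhat Ep En ∧
      (∀ h : (Fin 2 → ℝ) × ℝ, Majority h Ep En →
        errPos hhat Ep + errNeg hhat En ≤ errPos h Ep + errNeg h En) ∧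
      (errPos hhat Dp = Np ∨ errNeg hhat Dn = Nn) :=
  hcond.elim (perfectlyAttackable_of_lt_two_mul_pos hNn hap)
    (perfectlyAttackable_of_lt_two_mul_neg hNp han)
end

section
/- Let (D⁺, D⁻) be linearly separable training data in ℝ^p, let α = (α⁺, α⁻) ∈ ℕ × ℕ, let (E⁺, E⁻) be an α-bounded feature attack on (D⁺, D⁻), and let ĥ be an affine classifier minimizing the total 0-1 error err⁺(h, E⁺) + err⁻(h, E⁻) over all affine classifiers h. Then err⁺(ĥ, E⁺) + err⁻(ĥ, E⁻) ≤ α⁺ + α⁻, and consequently err⁺(ĥ, D⁺) ≤ 2α⁺ + α⁻ and err⁻(ĥ, D⁻) ≤ α⁺ + 2α⁻. -/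
/-!
A separator of the clean data misclassifies no point of `(Dp, Dn)`, so on the attacked data it errs
at most on the `ap + an` injected points, and the optimal classifier `hhat` does no worse. Since the
attack keeps the cardinalities, it also removed at most `ap` (resp. `an`) clean points, so passing
from `(Ep, En)` back to `(Dp, Dn)` costs `hhat` at most `ap` (resp. `an`) further errors.
-/

open scoped Classical BigOperators

namespace Multiset

variable {α : Type*} [DecidableEq α]

lemma countP_le_countP_add_card_sub (p : α → Prop) [DecidablePred p] (s t : Multiset α) :
    countP p s ≤ countP p t + card (s - t) :=
  calc countP p s ≤ countP p (s - t + t) := countP_le_of_le p Multiset.le_sub_add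
    _ = countP p (s - t) + countP p t := countP_add _ _ _
    _ ≤ countP p t + card (s - t) := by linarith [countP_le_card p (s - t)]

lemma card_sub_eq_card_sub_of_card_eq {s t : Multiset α} (h : card s = card t) :
    card (s - t) = card (t - s) := by
  have hunion : card (s - t) + card t = card (t - s) + card s := by
    rw [← card_add, ← card_add, ← union_def, ← union_def, union_comm]
  omega

end Multiset

lemma errPos_le_add_card_sub {p : ℕ} (h : (Fin p → ℝ) × ℝ) (S T : Multiset (Fin p → ℝ)) :
    errPos h S ≤ errPos h T + Multiset.card (S - T) :=
  Multiset.countP_le_countP_add_card_sub _ S T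

lemma errNeg_le_add_card_sub {p : ℕ} (h : (Fin p → ℝ) × ℝ) (S T : Multiset (Fin p → ℝ)) :
    errNeg h S ≤ errNeg h T + Multiset.card (S - T) :=
  Multiset.countP_le_countP_add_card_sub _ S T

theorem stmt10_general {p : ℕ}
    (Dp Dn Ep En : Multiset (Fin p → ℝ)) (ap an : ℕ)
    (hsep : LinSep Dp Dn)
    (hBFA : IsBFA ap an Dp Dn Ep En)
    (hhat : (Fin p → ℝ) × ℝ)
    (hopt : ∀ h : (Fin p → ℝ) × ℝ,
      errPos hhat Ep + errNeg hhat En ≤ errPos h Ep + errNeg h En) :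
    errPos hhat Ep + errNeg hhat En ≤ ap + an ∧
    errPos hhat Dp ≤ 2 * ap + an ∧
    errNeg hhat Dn ≤ ap + 2 * an := by
  obtain ⟨h, hDp, hDn⟩ := hsep
  obtain ⟨hcardP, hcardN, hEDp, hEDn⟩ := hBFA
  have hDEp : Multiset.card (Dp - Ep) ≤ ap :=
    Multiset.card_sub_eq_card_sub_of_card_eq hcardP.symm ▸ hEDp
  have hDEn : Multiset.card (Dn - En) ≤ an :=
    Multiset.card_sub_eq_card_sub_of_card_eq hcardN.symm ▸ hEDn
  have hsepE : errPos h Ep + errNeg h En ≤ ap + an := by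
    have := errPos_le_add_card_sub h Ep Dp
    have := errNeg_le_add_card_sub h En Dn
    omega
  have hhatE := (hopt h).trans hsepE
  refine ⟨hhatE, ?_, ?_⟩
  · have := errPos_le_add_card_sub hhat Dp Ep
    omega
  · have := errNeg_le_add_card_sub hhat Dn En
    omega

theorem stmt10 {p : ℕ} (hp : 1 ≤ p)
    (Dp Dn Ep En : Multiset (Fin p → ℝ)) (ap an : ℕ)
    (hsep : LinSep Dp Dn)
    (hBFA : IsBFA ap an Dp Dn Ep En)
    (hhat : (Fin p → ℝ) × ℝ)
    (hopt : ∀ h : (Fin p → ℝ) × ℝ,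
      errPos hhat Ep + errNeg hhat En ≤ errPos h Ep + errNeg h En) :
    errPos hhat Ep + errNeg hhat En ≤ ap + an ∧
    errPos hhat Dp ≤ 2 * ap + an ∧
    errNeg hhat Dn ≤ ap + 2 * an :=
  stmt10_general Dp Dn Ep En ap an hsep hBFA hhat hopt
end
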